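/- arXiv:2105.13332 — 4 statements merged into one kernel-verified Lean document; each statement's English description precedes it below -/
import Mathlib

section
/- Let S be a subset of V(G) containing all internal vertices of some spanning tree T of a connected graph G, with S nonempty. Then the subgraph of G induced by S is connected. -/
/-- If `S` is a nonempty vertex subset of a connected graph `G` containing all internal
vertices (those of degree at least `2`) of a spanning tree `T` of `G`, then the subgraph
of `G` induced by `S` is connected. -/
theorem induce_connected_of_internal_subset {V : Type*} [Fintype V] (G T : SimpleGraph V)
    [DecidableRel T.Adj] (hconn : G.Connected) (hsub : T ≤ G) (htree : T.IsTree)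
    (S : Set V) (hS : S.Nonempty) (hint : ∀ v : V, 2 ≤ T.degree v → v ∈ S) :
    (G.induce S).Connected := by
  classical
  have key : ∀ {u v : V} (p : T.Walk u v), p.IsPath → ∀ (hu : u ∈ S) (hv : v ∈ S),
      (G.induce S).Reachable ⟨u, hu⟩ ⟨v, hv⟩ := by
    intro u v p
    induction p with
    | nil =>
      intro _ hu hv
      exact SimpleGraph.Reachable.refl _
    | @cons u w v h p ih =>
      intro hp hu hv
      have hw : w ∈ S := by
        cases p with
        | nil => exact hv
        | @cons _ x _ h' q =>
          apply hint
          have hune : u ≠ x := by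
            have hns := (SimpleGraph.Walk.cons_isPath_iff _ _).1 hp |>.2
            intro he
            exact hns (by
              rw [he]
              exact List.mem_cons_of_mem _ (SimpleGraph.Walk.start_mem_support q))
          rw [← SimpleGraph.card_neighborFinset_eq_degree]
          refine Finset.one_lt_card.2 ⟨u, ?_, x, ?_, hune⟩
          · exact (SimpleGraph.mem_neighborFinset _ _ _).2 h.symm
          · exact (SimpleGraph.mem_neighborFinset _ _ _).2 h'
      have hadj : (G.induce S).Adj ⟨u, hu⟩ ⟨w, hw⟩ := hsub h
      exact hadj.reachable.trans (ih hp.of_cons hw hv)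
  rw [SimpleGraph.connected_iff]
  refine ⟨?_, hS.to_subtype⟩
  rintro ⟨a, ha⟩ ⟨b, hb⟩
  obtain ⟨w⟩ := htree.isConnected a b
  exact key w.toPath w.toPath.2 ha hb
end

section
/- For every integer n ≥ 1 and real α ∈ (1/2, 1), the average size of the subsets of {1,...,n} having size at least αn is strictly less than αn + 1 + α(1−α)/(2α−1)^2. -/
/-- For `n ≥ 1` and `α ∈ (1/2, 1)`, the average size of the subsets of `{1,...,n}` of
size at least `αn` is strictly less than `αn + 1 + α(1−α)/(2α−1)^2`. -/
theorem avg_size_large_subsets_lt (n : ℕ) (hn : 1 ≤ n) (α : ℝ)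
    (hα : α ∈ Set.Ioo (1/2 : ℝ) 1) (𝒮 : Finset (Finset (Fin n)))
    (h𝒮 : ∀ S : Finset (Fin n), S ∈ 𝒮 ↔ α * n ≤ (S.card : ℝ)) :
    (∑ S ∈ 𝒮, (S.card : ℝ)) / 𝒮.card < α * n + 1 + α * (1 - α) / (2 * α - 1) ^ 2 := by
  obtain ⟨hα1, hα2⟩ := hα
  have hα0 : (0:ℝ) < α := by linarith
  have hn0 : (0:ℝ) < n := by exact_mod_cast hn
  set m : ℕ := ⌈α * n⌉₊ with hmdef
  have hmem : ∀ S : Finset (Fin n), S ∈ 𝒮 ↔ m ≤ S.card := by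
    intro S; rw [h𝒮]; exact ⟨fun h => Nat.ceil_le.mpr h, fun h => (Nat.le_ceil _).trans (by exact_mod_cast h)⟩
  have hmn : m ≤ n := Nat.ceil_le.mpr (by nlinarith)
  have hαm : α * n ≤ (m : ℝ) := Nat.le_ceil _
  set r : ℝ := (1 - α) / α with hrdef
  have hr0 : 0 ≤ r := div_nonneg (by linarith) hα0.le
  have hr1 : r < 1 := by rw [div_lt_one hα0]; linarith
  -- fibers
  have hmapsto : ∀ S ∈ 𝒮, S.card ∈ Finset.Icc m n := fun S hS =>
    Finset.mem_Icc.mpr ⟨(hmem S).mp hS, by simpa using Finset.card_le_univ S⟩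
  have hfiber : ∀ k ∈ Finset.Icc m n,
      𝒮.filter (fun S => S.card = k) = Finset.univ.powersetCard k := by
    intro k hk
    obtain ⟨hk1, _⟩ := Finset.mem_Icc.mp hk
    ext S
    simp only [Finset.mem_filter, Finset.mem_powersetCard_univ, hmem]
    exact ⟨fun h => h.2, fun h => ⟨h ▸ hk1, h⟩⟩
  have hcardfiber : ∀ k ∈ Finset.Icc m n,
      ((𝒮.filter (fun S => S.card = k)).card : ℝ) = (n.choose k : ℝ) := by
    intro k hk
    rw [hfiber k hk, Finset.card_powersetCard]
    simp
  have hD : (𝒮.card : ℝ) = ∑ k ∈ Finset.Icc m n, (n.choose k : ℝ) := by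
    rw [Finset.card_eq_sum_card_fiberwise hmapsto]
    push_cast
    exact Finset.sum_congr rfl fun k hk => hcardfiber k hk
  have hA : ∑ S ∈ 𝒮, (S.card : ℝ) = ∑ k ∈ Finset.Icc m n, (k : ℝ) * (n.choose k : ℝ) := by
    rw [← Finset.sum_fiberwise_of_maps_to hmapsto (fun S => (S.card : ℝ))]
    refine Finset.sum_congr rfl fun k hk => ?_
    rw [← hcardfiber k hk]
    rw [Finset.sum_congr rfl (fun S hS => by rw [(Finset.mem_filter.mp hS).2]),
      Finset.sum_const, nsmul_eq_mul, mul_comm]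
  -- ratio bound
  have hstep : ∀ k, m ≤ k → k < n → (n.choose (k+1) : ℝ) ≤ r * (n.choose k : ℝ) := by
    intro k hk hkn
    have hid := Nat.choose_succ_right_eq n k
    have hidR : (n.choose (k+1) : ℝ) * (k+1) = (n.choose k : ℝ) * ((n:ℝ) - k) := by
      have := congrArg (fun x : ℕ => (x : ℝ)) hid
      push_cast [Nat.cast_sub hkn.le] at this
      linarith [this]
    have hkα : α * n ≤ (k : ℝ) := hαm.trans (by exact_mod_cast hk)
    have hkey : α * ((n:ℝ) - k) ≤ (1 - α) * ((k:ℝ) + 1) := by nlinarith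
    have hk1 : (0:ℝ) < (k:ℝ) + 1 := by positivity
    rw [hrdef, div_mul_eq_mul_div, le_div_iff₀ hα0]
    have hcnk : (0:ℝ) ≤ (n.choose k : ℝ) := by positivity
    nlinarith [mul_le_mul_of_nonneg_left hkey hcnk]
  have hchoose : ∀ j, m + j ≤ n → (n.choose (m+j) : ℝ) ≤ r ^ j * (n.choose m : ℝ) := by
    intro j
    induction j with
    | zero => simp
    | succ j ih =>
      intro hj
      have h1 : m + j < n := by omega
      calc (n.choose (m+j+1) : ℝ) ≤ r * (n.choose (m+j) : ℝ) := hstep _ (by omega) h1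
        _ ≤ r * (r ^ j * (n.choose m : ℝ)) :=
            mul_le_mul_of_nonneg_left (ih (by omega)) hr0
        _ = r ^ (j+1) * (n.choose m : ℝ) := by ring
  -- geometric tail bound
  have hgeo : ∑ k ∈ Finset.Icc m n, ((k : ℝ) - m) * (n.choose k : ℝ) ≤
      (n.choose m : ℝ) * (r / (1 - r) ^ 2) := by
    have h1 : ∀ k ∈ Finset.Icc m n, ((k : ℝ) - m) * (n.choose k : ℝ) ≤
        ((k - m : ℕ) : ℝ) * r ^ (k - m) * (n.choose m : ℝ) := by
      intro k hk
      obtain ⟨hk1, hk2⟩ := Finset.mem_Icc.mp hk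
      have hc : (k:ℝ) - m = ((k - m : ℕ) : ℝ) := by push_cast [Nat.cast_sub hk1]; ring
      rw [hc, mul_assoc]
      refine mul_le_mul_of_nonneg_left ?_ (by positivity)
      have := hchoose (k - m) (by omega)
      rwa [Nat.add_sub_cancel' hk1] at this
    calc ∑ k ∈ Finset.Icc m n, ((k : ℝ) - m) * (n.choose k : ℝ)
        ≤ ∑ k ∈ Finset.Icc m n, ((k - m : ℕ) : ℝ) * r ^ (k - m) * (n.choose m : ℝ) :=
          Finset.sum_le_sum h1
      _ = (∑ k ∈ Finset.Icc m n, ((k - m : ℕ) : ℝ) * r ^ (k - m)) * (n.choose m : ℝ) := by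
          rw [Finset.sum_mul]
      _ ≤ (r / (1 - r) ^ 2) * (n.choose m : ℝ) := by
          refine mul_le_mul_of_nonneg_right ?_ (by positivity)
          rw [← Finset.Ico_add_one_right_eq_Icc, Finset.sum_Ico_eq_sum_range]
          have hsummable : Summable (fun i : ℕ => (i : ℝ) * r ^ i) := by
            have := summable_pow_mul_geometric_of_norm_lt_one 1 (r := r)
              (by rw [Real.norm_eq_abs, abs_of_nonneg hr0]; exact hr1)
            simpa using this
          have h2 : ∑ i ∈ Finset.range (n + 1 - m), ((m + i - m : ℕ) : ℝ) * r ^ (m + i - m)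
              = ∑ i ∈ Finset.range (n + 1 - m), (i : ℝ) * r ^ i := by
            refine Finset.sum_congr rfl fun i _ => by rw [Nat.add_sub_cancel_left]
          rw [h2, ← tsum_coe_mul_geometric_of_norm_lt_one
            (by rw [Real.norm_eq_abs, abs_of_nonneg hr0]; exact hr1)]
          exact Summable.sum_le_tsum _ (fun i _ => by positivity) hsummable
      _ = (n.choose m : ℝ) * (r / (1 - r) ^ 2) := mul_comm _ _
  -- positivity of denominator
  have hC0 : (0:ℝ) < (n.choose m : ℝ) := by exact_mod_cast Nat.choose_pos hmn
  have hCD : (n.choose m : ℝ) ≤ (𝒮.card : ℝ) := by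
    rw [hD]
    exact Finset.single_le_sum (f := fun k => (n.choose k : ℝ)) (fun k _ => by positivity)
      (Finset.mem_Icc.mpr ⟨le_refl m, hmn⟩)
  have hD0 : (0:ℝ) < (𝒮.card : ℝ) := lt_of_lt_of_le hC0 hCD
  set K : ℝ := r / (1 - r) ^ 2 with hKdef
  have hK0 : 0 ≤ K := by positivity
  -- main bound : A ≤ (m + K) * D
  have hmain : ∑ S ∈ 𝒮, (S.card : ℝ) ≤ ((m:ℝ) + K) * (𝒮.card : ℝ) := by
    rw [hA, hD]
    have : ∑ k ∈ Finset.Icc m n, (k : ℝ) * (n.choose k : ℝ)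
        = (∑ k ∈ Finset.Icc m n, ((k : ℝ) - m) * (n.choose k : ℝ))
          + (m:ℝ) * ∑ k ∈ Finset.Icc m n, (n.choose k : ℝ) := by
      rw [Finset.mul_sum, ← Finset.sum_add_distrib]
      exact Finset.sum_congr rfl fun k _ => by ring
    rw [this]
    have hKC : (n.choose m : ℝ) * K ≤ (𝒮.card : ℝ) * K := mul_le_mul_of_nonneg_right hCD hK0
    rw [hD] at hKC
    nlinarith [hgeo]
  -- K equals the explicit expression
  have hKeq : K = α * (1 - α) / (2 * α - 1) ^ 2 := by
    have h1 : (2 * α - 1) ≠ 0 := by intro h; nlinarith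
    have h2 : 1 - r = (2 * α - 1) / α := by rw [hrdef]; field_simp; ring
    rw [hKdef, h2, hrdef, div_pow]
    rw [div_div_div_comm]
    rw [div_div_eq_mul_div, div_mul_eq_mul_div, div_div]
    rw [div_eq_div_iff (by positivity) (by positivity)]
    ring
  have hmlt : (m : ℝ) < α * n + 1 := Nat.ceil_lt_add_one (by positivity)
  calc (∑ S ∈ 𝒮, (S.card : ℝ)) / 𝒮.card ≤ (m:ℝ) + K := by
        rw [div_le_iff₀ hD0]; exact hmain
    _ < α * n + 1 + K := by linarith
    _ = α * n + 1 + α * (1 - α) / (2 * α - 1) ^ 2 := by rw [hKeq]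
end

section
/- Let a_n = 7^n + (191/3)·n·7^{n−2} − (16/3)·n for n ≥ 3. Then (1/2)·a_n^{1/(4n)} → (1/2)·7^{1/4} as n → ∞. -/
/-!
Since `7^(n-2) ≥ 1`, the term `(191/3)·n·7^(n-2)` outweighs `(16/3)·n`, so
`7^n ≤ a_n ≤ 65·n·7^n`. Taking `4n`-th roots, the lower bound gives `7^(1/4)` and the upper
bound `(65n)^(1/(4n))·7^(1/4)`, whose first factor tends to `1`.
-/

open Filter Topology

lemma pow_rpow_one_div_mul_natCast {b : ℝ} (hb : 0 ≤ b) (k : ℝ) {n : ℕ} (hn : n ≠ 0) :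
    (b ^ n) ^ (1 / (k * n)) = b ^ (1 / k) := by
  have hn' : (n : ℝ) ≠ 0 := Nat.cast_ne_zero.mpr hn
  rw [← Real.rpow_natCast, ← Real.rpow_mul hb]
  congr 1
  rw [mul_comm k, ← div_div, mul_div_assoc', mul_one_div_cancel hn']

lemma tendsto_mul_natCast_rpow_one_div_mul_natCast {C k : ℝ} (hC : 0 < C) (hk : 0 < k) :
    Tendsto (fun n : ℕ => (C * n) ^ (1 / (k * n))) atTop (𝓝 1) := by
  refine ((tendsto_rpow_div_mul_add 1 (k / C) 0 (div_pos hk hC).ne).comp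
    (tendsto_natCast_atTop_atTop.const_mul_atTop hC)).congr fun n => ?_
  simp only [Function.comp_apply]
  congr 1
  field_simp
  rw [add_zero, div_mul_cancel_left₀ hk.ne', one_div]

theorem tendsto_rpow_one_div_mul_natCast_of_pow_le_of_le_mul_pow {a : ℕ → ℝ} {b C k : ℝ}
    (hb : 0 < b) (hC : 0 < C) (hk : 0 < k)
    (hlow : ∀ᶠ n in atTop, b ^ n ≤ a n) (hup : ∀ᶠ n in atTop, a n ≤ C * n * b ^ n) :
    Tendsto (fun n : ℕ => a n ^ (1 / (k * n))) atTop (𝓝 (b ^ (1 / k))) := by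
  have hupper : Tendsto (fun n : ℕ => (C * n) ^ (1 / (k * n)) * b ^ (1 / k)) atTop
      (𝓝 (b ^ (1 / k))) := by
    simpa using (tendsto_mul_natCast_rpow_one_div_mul_natCast hC hk).mul_const (b ^ (1 / k))
  refine tendsto_of_tendsto_of_tendsto_of_le_of_le' tendsto_const_nhds hupper ?_ ?_
  · filter_upwards [hlow, eventually_ne_atTop 0] with n hn hn0
    calc b ^ (1 / k) = (b ^ n) ^ (1 / (k * n)) :=
          (pow_rpow_one_div_mul_natCast hb.le k hn0).symm
      _ ≤ a n ^ (1 / (k * n)) := by gcongr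
  · filter_upwards [hlow, hup, eventually_ne_atTop 0] with n hnlow hnup hn0
    calc a n ^ (1 / (k * n)) ≤ (C * n * b ^ n) ^ (1 / (k * n)) := by
          gcongr
          exact (pow_pos hb n).le.trans hnlow
      _ = (C * n) ^ (1 / (k * n)) * b ^ (1 / k) := by
          rw [Real.mul_rpow (by positivity) (by positivity),
            pow_rpow_one_div_mul_natCast hb.le k hn0]

/-- The closed form of `N(Π_n^×)`, the number of connected sets of the criss-cross prism. -/
noncomputable def crisscrossConnectedSets (n : ℕ) : ℝ :=
  7 ^ n + 191 / 3 * n * 7 ^ (n - 2) - 16 / 3 * n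

lemma pow_le_crisscrossConnectedSets (n : ℕ) : (7 : ℝ) ^ n ≤ crisscrossConnectedSets n := by
  have h7 : (1 : ℝ) ≤ 7 ^ (n - 2) := one_le_pow₀ (by norm_num)
  have hn : (0 : ℝ) ≤ n := n.cast_nonneg
  unfold crisscrossConnectedSets
  nlinarith

lemma crisscrossConnectedSets_le {n : ℕ} (hn : 1 ≤ n) :
    crisscrossConnectedSets n ≤ 65 * n * 7 ^ n := by
  have h7 : (7 : ℝ) ^ (n - 2) ≤ 7 ^ n := pow_le_pow_right₀ (by norm_num) (Nat.sub_le n 2)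
  have hn' : (1 : ℝ) ≤ n := by exact_mod_cast hn
  have hpos : (0 : ℝ) < 7 ^ n := by positivity
  unfold crisscrossConnectedSets
  nlinarith

/-- Let `a_n = 7^n + (191/3)·n·7^(n−2) − (16/3)·n` (the number of connected sets of the
criss-cross prism `Π_n^×`, a cubic graph on `4n` vertices). Then
`(1/2)·a_n^(1/(4n)) → (1/2)·7^(1/4)` as `n → ∞`. -/
theorem crisscross_c_limit :
    Tendsto
      (fun n : ℕ =>
        (1 / 2 : ℝ) *
          ((7 : ℝ) ^ n + 191 / 3 * n * 7 ^ (n - 2) - 16 / 3 * n) ^ ((1 : ℝ) / (4 * n)))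
      atTop (nhds ((1 / 2 : ℝ) * (7 : ℝ) ^ ((1 : ℝ) / 4))) :=
  (tendsto_rpow_one_div_mul_natCast_of_pow_le_of_le_mul_pow (a := crisscrossConnectedSets)
    (by norm_num) (by norm_num) (by norm_num) (.of_forall pow_le_crisscrossConnectedSets)
    ((eventually_ge_atTop 1).mono fun _ => crisscrossConnectedSets_le)).const_mul _
end

section
/- For every integer n ≥ 3 and every integer k with 1 ≤ k ≤ n/2, the k-th power of the cycle C_n^k (vertices v_1,...,v_n, with v_i adjacent to v_j iff the cyclic distance between i and j is at most k) has at least 2^{n − ⌈n/k⌉} connected sets. Consequently c(C_n^k) ≥ (1/2)·2^{(n−⌈n/k⌉)/n}. -/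
/-- The number of connected sets `N(G)`: nonempty vertex subsets inducing a connected
subgraph. -/
noncomputable def numConnSets {V : Type*} [Fintype V] (G : SimpleGraph V) : ℕ :=
  Nat.card {S : Finset V // S.Nonempty ∧ (G.induce (S : Set V)).Connected}

/-- The `k`-th power `C_n^k` of the cycle on `n` vertices: `v_i` is adjacent to `v_j`
iff `i ≠ j` and the cyclic distance between `i` and `j` is at most `k` (equivalently,
one of the two directed cyclic distances is at most `k`). -/
def cyclePower (n k : ℕ) : SimpleGraph (Fin n) :=
  SimpleGraph.fromRel (fun i j => (j.val + n - i.val) % n ≤ k)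

/-! The vertices `0, k, 2k, …` of `C_n^k` are consecutive neighbours along a path, and every
other vertex lies less than `k` steps after one of them, so they form a connected dominating
set of at most `⌈n/k⌉` vertices. Every superset of a connected dominating set is connected,
which yields `2^(n - ⌈n/k⌉)` distinct connected sets; the bound on `c(C_n^k)` follows by taking
`n`-th roots. -/

open Finset

namespace SimpleGraph

variable {V : Type*} {G : SimpleGraph V}

theorem Preconnected.induce_range {W : Type*} {H : SimpleGraph W} (φ : H →g G)
    (hH : H.Preconnected) : (G.induce (Set.range φ)).Preconnected :=
  hH.map ⟨fun w => ⟨φ w, w, rfl⟩, φ.map_rel⟩ (by rintro ⟨_, w, rfl⟩; exact ⟨w, rfl⟩)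

theorem Connected.induce_of_dominating {s t : Set V} (hs : (G.induce s).Connected)
    (hst : s ⊆ t) (hdom : ∀ v ∈ t, v ∉ s → ∃ u ∈ s, G.Adj u v) : (G.induce t).Connected := by
  obtain ⟨⟨u, hu⟩⟩ := hs.nonempty
  refine G.induce_connected_of_patches u (hst hu) fun {v} hv => ?_
  by_cases hvs : v ∈ s
  · exact ⟨s, hst, hu, hvs, hs.preconnected _ _⟩
  · obtain ⟨w, hw, hwv⟩ := hdom v hv hvs
    have hsv : (G.induce (s ∪ {v})).Connected :=
      G.connected_induce_union hs.preconnected Preconnected.of_subsingleton hw rfl hwv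
    exact ⟨s ∪ {v}, Set.union_subset hst (Set.singleton_subset_iff.mpr hv), Or.inl hu, Or.inr rfl,
      hsv.preconnected _ _⟩

theorem two_pow_card_sub_le_numConnSets [Fintype V] (D : Finset V)
    (hD : (G.induce (D : Set V)).Connected) (hdom : ∀ v ∉ D, ∃ u ∈ D, G.Adj u v) :
    2 ^ (Fintype.card V - #D) ≤ numConnSets G := by
  classical
  obtain ⟨⟨u, hu⟩⟩ := hD.nonempty
  have hsuperset (T : Finset V) : (G.induce ((T ∪ D : Finset V) : Set V)).Connected :=
    hD.induce_of_dominating (by simp) fun v _ hv => hdom v hv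
  let extend (T : (Dᶜ).powerset) :
      {S : Finset V // S.Nonempty ∧ (G.induce (S : Set V)).Connected} :=
    ⟨T.1 ∪ D, ⟨u, mem_union_right _ hu⟩, hsuperset T.1⟩
  have hextend : Function.Injective extend := by
    rintro ⟨T₁, h₁⟩ ⟨T₂, h₂⟩ h
    have h₁ : Disjoint T₁ D := subset_compl_iff_disjoint_right.mp (mem_powerset.mp h₁)
    have h₂ : Disjoint T₂ D := subset_compl_iff_disjoint_right.mp (mem_powerset.mp h₂)
    have h : T₁ ∪ D = T₂ ∪ D := congrArg Subtype.val h
    rw [Subtype.mk.injEq, ← union_sdiff_cancel_right h₁, h, union_sdiff_cancel_right h₂]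
  have := Nat.card_le_card_of_injective extend hextend
  rwa [Nat.card_eq_fintype_card, Fintype.card_coe, card_powerset, card_compl] at this

end SimpleGraph

section CyclePower

open SimpleGraph

variable {n k : ℕ}

theorem mul_lt_of_lt_ceil_div {a : ℕ} (ha : a < ⌈(n : ℝ) / k⌉₊) : k * a < n := by
  rw [Nat.lt_ceil] at ha
  rcases k.eq_zero_or_pos with rfl | hk
  · exact absurd ha (by simp)
  · rw [lt_div_iff₀ (by exact_mod_cast hk)] at ha
    rw [mul_comm]
    exact_mod_cast ha

/-- The vertices `0, k, 2k, …`: with vertices numbered from `0`, the paper's connected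
dominating set `{v_i : i ≡ 1 mod k}`. -/
def cyclePowerSpine (n k : ℕ) (a : Fin ⌈(n : ℝ) / k⌉₊) : Fin n :=
  ⟨k * a, mul_lt_of_lt_ceil_div a.isLt⟩

theorem cyclePower_adj_of_lt {i j : Fin n} (hij : i < j) (hjk : j.val ≤ i.val + k) :
    (cyclePower n k).Adj i j := by
  refine (fromRel_adj _ i j).mpr ⟨hij.ne, Or.inl ?_⟩
  have hsub : j.val + n - i.val = (j.val - i.val) + n := by omega
  rw [hsub, Nat.add_mod_right]
  exact (Nat.mod_le _ _).trans (by omega)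

theorem cyclePower_adj_cyclePowerSpine_of_succ_eq (hk : 0 < k) {a b : Fin ⌈(n : ℝ) / k⌉₊}
    (hab : a.val + 1 = b.val) :
    (cyclePower n k).Adj (cyclePowerSpine n k a) (cyclePowerSpine n k b) :=
  cyclePower_adj_of_lt ((Nat.mul_lt_mul_left hk).mpr (by omega))
    (by simp [cyclePowerSpine, ← hab, Nat.mul_succ])

theorem preconnected_induce_range_cyclePowerSpine (hk : 0 < k) :
    ((cyclePower n k).induce (Set.range (cyclePowerSpine n k))).Preconnected := by
  refine Preconnected.induce_range ⟨cyclePowerSpine n k, fun {a b} hab => ?_⟩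
    (pathGraph_preconnected _)
  rcases pathGraph_adj.mp hab with h | h
  · exact cyclePower_adj_cyclePowerSpine_of_succ_eq hk h
  · exact (cyclePower_adj_cyclePowerSpine_of_succ_eq hk h).symm

theorem exists_cyclePowerSpine_adj (hk : 0 < k) (v : Fin n)
    (hv : v ∉ Set.range (cyclePowerSpine n k)) :
    ∃ a, (cyclePower n k).Adj (cyclePowerSpine n k a) v := by
  have ha : v.val / k < ⌈(n : ℝ) / k⌉₊ := by
    rw [Nat.lt_ceil, lt_div_iff₀ (by exact_mod_cast hk)]
    exact_mod_cast (Nat.div_mul_le_self v.val k).trans_lt v.isLt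
  have hne : cyclePowerSpine n k ⟨v.val / k, ha⟩ ≠ v := fun h => hv ⟨_, h⟩
  refine ⟨⟨v.val / k, ha⟩, cyclePower_adj_of_lt ?_ ?_⟩
  · exact lt_of_le_of_ne (Nat.mul_div_le v.val k) hne
  · show v.val ≤ k * (v.val / k) + k
    have := Nat.mod_add_div v.val k
    have := Nat.mod_lt v.val hk
    omega

theorem two_pow_sub_ceil_div_le_numConnSets_cyclePower (hn : 0 < n) (hk : 0 < k) :
    2 ^ (n - ⌈(n : ℝ) / k⌉₊) ≤ numConnSets (cyclePower n k) := by
  classical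
  set D := univ.image (cyclePowerSpine n k)
  have hDrange : (D : Set (Fin n)) = Set.range (cyclePowerSpine n k) := by simp [D]
  have hD : ((cyclePower n k).induce (D : Set (Fin n))).Connected := by
    have h0 : 0 < ⌈(n : ℝ) / k⌉₊ := Nat.lt_ceil.mpr (by rw [Nat.cast_zero]; positivity)
    rw [hDrange, connected_iff]
    exact ⟨preconnected_induce_range_cyclePowerSpine hk, ⟨⟨_, ⟨0, h0⟩, rfl⟩⟩⟩
  have hdom (v : Fin n) (hv : v ∉ D) : ∃ u ∈ D, (cyclePower n k).Adj u v := by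
    obtain ⟨a, ha⟩ := exists_cyclePowerSpine_adj hk v (by simpa [← hDrange] using hv)
    exact ⟨_, mem_image_of_mem _ (mem_univ a), ha⟩
  have hcard : #D ≤ ⌈(n : ℝ) / k⌉₊ := card_image_le.trans (by simp)
  calc 2 ^ (n - ⌈(n : ℝ) / k⌉₊) ≤ 2 ^ (Fintype.card (Fin n) - #D) :=
        Nat.pow_le_pow_right two_pos (by simp only [Fintype.card_fin]; omega)
    _ ≤ numConnSets (cyclePower n k) := two_pow_card_sub_le_numConnSets D hD hdom

end CyclePower

theorem cyclePower_numConnSets_general (n k : ℕ) (hn : 3 ≤ n) (hk1 : 1 ≤ k) :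
    2 ^ (n - ⌈(n : ℝ) / k⌉₊) ≤ numConnSets (cyclePower n k) ∧
      (1 / 2 : ℝ) * (2 : ℝ) ^ (((n : ℝ) - ⌈(n : ℝ) / k⌉₊) / n) ≤
        (1 / 2 : ℝ) * (numConnSets (cyclePower n k) : ℝ) ^ ((1 : ℝ) / n) := by
  have hcount := two_pow_sub_ceil_div_le_numConnSets_cyclePower (n := n) (by omega) hk1
  refine ⟨hcount, ?_⟩
  have hceil : ⌈(n : ℝ) / k⌉₊ ≤ n :=
    Nat.ceil_le.mpr (div_le_self (Nat.cast_nonneg n) (by exact_mod_cast hk1))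
  gcongr
  calc (2 : ℝ) ^ (((n : ℝ) - ⌈(n : ℝ) / k⌉₊) / n)
      = ((2 : ℝ) ^ (n - ⌈(n : ℝ) / k⌉₊)) ^ ((1 : ℝ) / n) := by
        rw [← Real.rpow_natCast, ← Real.rpow_mul zero_le_two, Nat.cast_sub hceil, mul_one_div]
    _ ≤ (numConnSets (cyclePower n k) : ℝ) ^ ((1 : ℝ) / n) :=
        Real.rpow_le_rpow (by positivity) (by exact_mod_cast hcount) (by positivity)

/-- For `n ≥ 3` and `1 ≤ k ≤ n/2`, the graph `C_n^k` has at least `2^(n − ⌈n/k⌉)`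
connected sets; consequently `c(C_n^k) ≥ (1/2)·2^((n−⌈n/k⌉)/n)`. -/
theorem cyclePower_numConnSets (n k : ℕ) (hn : 3 ≤ n) (hk1 : 1 ≤ k) (hk2 : 2 * k ≤ n) :
    2 ^ (n - ⌈(n : ℝ) / k⌉₊) ≤ numConnSets (cyclePower n k) ∧
      (1 / 2 : ℝ) * (2 : ℝ) ^ (((n : ℝ) - ⌈(n : ℝ) / k⌉₊) / n) ≤
        (1 / 2 : ℝ) * (numConnSets (cyclePower n k) : ℝ) ^ ((1 : ℝ) / n) :=
  cyclePower_numConnSets_general n k hn hk1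
end
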